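/- arXiv:2404.00968 — 2 statements merged into one kernel-verified Lean document; each statement's English description precedes it below -/
import Mathlib

section
/- Let Φ ∈ ℝ^{m×m} be symmetric positive definite and A: ℝ^m → ℝ^m be ε-cocoercive in the Euclidean inner product. Then Φ⁻¹∘A is ξ-cocoercive in the Φ-induced inner product ⟨x,y⟩_Φ = xᵀΦy, with ξ = ε/λ_max(Φ⁻¹); i.e., ⟨Φ⁻¹A(ω) - Φ⁻¹A(ω'), ω - ω'⟩_Φ ≥ ξ‖Φ⁻¹A(ω) - Φ⁻¹A(ω')‖²_Φ. -/
/-!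
Since `Φ` is symmetric, `⟨Φ⁻¹ x, w⟩_Φ = ⟨x, w⟩`, so both sides of the claim reduce to Euclidean
quantities in `u = A ω - A ω'`: the right side is `⟨u, ω - ω'⟩ ≥ ε ‖u‖²` and the `Φ`-norm of
`Φ⁻¹ u` is `uᵀ Φ⁻¹ u ≤ λ_max(Φ⁻¹) ‖u‖²`. The Rayleigh bound comes from the spectral theorem:
`λ_max • 1 - Φ⁻¹` is a unitary conjugate of a nonnegative diagonal matrix.
-/

open Matrix

namespace Matrix

section RCLike

open Unitary
open scoped ComplexOrder

variable {n 𝕜 : Type*} [Fintype n] [DecidableEq n] [RCLike 𝕜] {A : Matrix n n 𝕜}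

lemma IsHermitian.posSemidef_smul_one_sub (hA : A.IsHermitian) {c : ℝ}
    (hc : ∀ i, hA.eigenvalues i ≤ c) : (c • 1 - A).PosSemidef := by
  have hconj : c • 1 - A = conjStarAlgAut 𝕜 _ hA.eigenvectorUnitary
      (diagonal (RCLike.ofReal ∘ fun i => c - hA.eigenvalues i)) := by
    conv_lhs => rw [hA.spectral_theorem]
    rw [RCLike.real_smul_eq_coe_smul (K := 𝕜), ← map_one (conjStarAlgAut 𝕜 _ _), ← map_smul,
      ← map_sub]
    congr 1
    ext i j
    by_cases h : i = j <;> simp [h, Algebra.algebraMap_eq_smul_one, sub_smul]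
  rw [hconj, conjStarAlgAut_apply, isUnit_coe.posSemidef_star_right_conjugate_iff]
  simpa [posSemidef_diagonal_iff] using hc

end RCLike

variable {n : Type*} [Fintype n]

lemma IsHermitian.dotProduct_mulVec_le [DecidableEq n] {M : Matrix n n ℝ} (hM : M.IsHermitian)
    {c : ℝ} (hc : ∀ i, hM.eigenvalues i ≤ c) (u : n → ℝ) :
    u ⬝ᵥ M *ᵥ u ≤ c * (u ⬝ᵥ u) := by
  have h := (hM.posSemidef_smul_one_sub hc).dotProduct_mulVec_nonneg u
  rw [star_trivial, sub_mulVec, smul_mulVec, one_mulVec, dotProduct_sub, dotProduct_smul,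
    smul_eq_mul] at h
  linarith

lemma IsSymm.inv_mulVec_dotProduct_mulVec [DecidableEq n] {R : Type*} [CommRing R]
    {Φ : Matrix n n R} (hΦ : Φ.IsSymm) (hdet : IsUnit Φ.det) (x w : n → R) :
    (Φ⁻¹ *ᵥ x) ⬝ᵥ (Φ *ᵥ w) = x ⬝ᵥ w := by
  rw [dotProduct_comm, dotProduct_mulVec, ← vecMul_transpose, hΦ.eq, vecMul_vecMul,
    mul_nonsing_inv Φ hdet, vecMul_one, dotProduct_comm]

end Matrix

theorem stmt12 {ι : Type*} [Fintype ι] [DecidableEq ι] [Nonempty ι]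
    (Φ : Matrix ι ι ℝ) (hΦ : Φ.PosDef) (hHinv : (Φ⁻¹).IsHermitian)
    (A : (ι → ℝ) → (ι → ℝ)) (ε : ℝ) (hε : 0 < ε)
    (hA : ∀ ω ω', ε * ((A ω - A ω') ⬝ᵥ (A ω - A ω')) ≤ (A ω - A ω') ⬝ᵥ (ω - ω')) :
    ∀ ω ω' : ι → ℝ,
      (ε / Finset.univ.sup' Finset.univ_nonempty hHinv.eigenvalues) *
        ((Φ⁻¹ *ᵥ A ω - Φ⁻¹ *ᵥ A ω') ⬝ᵥ (Φ *ᵥ (Φ⁻¹ *ᵥ A ω - Φ⁻¹ *ᵥ A ω')))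
      ≤ (Φ⁻¹ *ᵥ A ω - Φ⁻¹ *ᵥ A ω') ⬝ᵥ (Φ *ᵥ (ω - ω')) := by
  intro ω ω'
  set lam := Finset.univ.sup' Finset.univ_nonempty hHinv.eigenvalues
  set u := A ω - A ω'
  have hlam_ge : ∀ i, hHinv.eigenvalues i ≤ lam := fun i => Finset.le_sup' _ (Finset.mem_univ i)
  have hlam_pos : 0 < lam :=
    (hΦ.inv.eigenvalues_pos (Classical.arbitrary ι)).trans_le (hlam_ge _)
  have hΦ_inner := IsSymm.inv_mulVec_dotProduct_mulVec (isHermitian_iff_isSymm.mp hΦ.1)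
    ((isUnit_iff_isUnit_det Φ).mp hΦ.isUnit)
  rw [← mulVec_sub, hΦ_inner, hΦ_inner]
  calc ε / lam * (u ⬝ᵥ Φ⁻¹ *ᵥ u) ≤ ε / lam * (lam * (u ⬝ᵥ u)) := by
        gcongr
        exact hHinv.dotProduct_mulVec_le hlam_ge u
    _ = ε * (u ⬝ᵥ u) := by field_simp
    _ ≤ u ⬝ᵥ (ω - ω') := hA ω ω'
end

section
/- Let Φ be symmetric positive definite and suppose ε > 0. If for all n: τ_n⁻¹ > 1/(2ε), υ_n⁻¹ > 1/(2ε), δ_n⁻¹ > 1/(2ε), together with the Schur-complement conditions ρ⁻¹ - (1/(2ε))I ≻ L(υ⁻¹ - (1/(2ε))I)⁻¹L and η⁻¹ - (1/(2ε))I ≻ Ā(τ⁻¹ - (1/(2ε))I)⁻¹Āᵀ + L_λ(δ⁻¹ - (1/(2ε))I)⁻¹L_λ, then the block matrix Φ = [[τ⁻¹,0,0,0,-Āᵀ],[0,υ⁻¹,L,0,0],[0,L,ρ⁻¹,0,0],[0,0,0,δ⁻¹,L_λ],[-Ā,0,0,L_λ,η⁻¹]] satisfies Φ - (1/(2ε))I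 ≻ 0, i.e., λ_min(Φ) > 1/(2ε). -/
/-!
Subtracting `c = 1/(2ε)` from `Φ` only shifts its diagonal blocks. The Schur complement of the
shifted `τ`-block removes the coupling through `-Ā` and subtracts `Ā (τ⁻¹ - c)⁻¹ Āᵀ` from the
`η`-block. What remains is block diagonal, with a `(υ, ρ)` block and a `(δ, η)` block whose
Schur complements with respect to their first blocks are exactly the two hypotheses.
-/

open Matrix

namespace Matrix

open scoped ComplexOrder Kronecker

theorem posDef_fromBlocks₁₁_iff {m n 𝕜 : Type*} [Fintype m] [DecidableEq m] [Fintype n]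
    [DecidableEq n] [RCLike 𝕜] {A : Matrix m m 𝕜} (B : Matrix m n 𝕜) (D : Matrix n n 𝕜)
    (hA : A.PosDef) :
    (fromBlocks A B Bᴴ D).PosDef ↔ (D - Bᴴ * A⁻¹ * B).PosDef := by
  let := hA.isUnit.invertible
  have hdet : (fromBlocks A B Bᴴ D).det = A.det * (D - Bᴴ * A⁻¹ * B).det := by
    rw [det_fromBlocks₁₁, invOf_eq_nonsing_inv]
  have hpsd := PosDef.fromBlocks₁₁ B D hA
  constructor
  · intro h
    refine (hpsd.1 h.posSemidef).posDef_iff_det_ne_zero.2 (right_ne_zero_of_mul (a := A.det) ?_)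
    exact hdet ▸ h.det_pos.ne'
  · intro h
    refine (hpsd.2 h.posSemidef).posDef_iff_det_ne_zero.2 ?_
    rw [hdet]
    exact mul_ne_zero hA.det_pos.ne' h.det_pos.ne'

theorem PosDef.fromBlocks_zero_zero {m n 𝕜 : Type*} [Fintype m] [DecidableEq m] [Fintype n]
    [DecidableEq n] [RCLike 𝕜] {A : Matrix m m 𝕜} {D : Matrix n n 𝕜} (hA : A.PosDef)
    (hD : D.PosDef) :
    (fromBlocks A 0 0 D).PosDef := by
  simpa using (posDef_fromBlocks₁₁_iff 0 D hA).2 (by simpa using hD)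

theorem fromBlocks_sub {l m n o α : Type*} [Sub α] (A : Matrix n l α) (B : Matrix n m α)
    (C : Matrix o l α) (D : Matrix o m α) (A' : Matrix n l α) (B' : Matrix n m α)
    (C' : Matrix o l α) (D' : Matrix o m α) :
    fromBlocks A B C D - fromBlocks A' B' C' D' =
      fromBlocks (A - A') (B - B') (C - C') (D - D') := by
  ext (i | i) (j | j) <;> rfl

theorem fromBlocks_sub_smul_one {m n R : Type*} [DecidableEq m] [DecidableEq n] [Ring R]
    (A : Matrix m m R) (B : Matrix m n R) (C : Matrix n m R) (D : Matrix n n R) (c : R) :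
    fromBlocks A B C D - c • 1 = fromBlocks (A - c • 1) B C (D - c • 1) := by
  rw [← fromBlocks_one, fromBlocks_smul, fromBlocks_sub]
  simp only [smul_zero, sub_zero]

theorem conjTranspose_fromCols_zero_mul_mul_fromCols_zero {l m n R : Type*} [Fintype l] [Ring R]
    [StarRing R] (A : Matrix l n R) (X : Matrix l l R) :
    (fromCols (0 : Matrix l m R) A)ᴴ * X * fromCols (0 : Matrix l m R) A =
      fromBlocks 0 0 0 (Aᴴ * X * A) := by
  rw [conjTranspose_fromCols_eq_fromRows_conjTranspose, fromRows_mul, fromRows_mul_fromCols]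
  simp

theorem IsHermitian.kronecker {m n R : Type*} [CommRing R] [StarRing R] {A : Matrix m m R}
    {B : Matrix n n R} (hA : A.IsHermitian) (hB : B.IsHermitian) : (A ⊗ₖ B).IsHermitian := by
  rw [IsHermitian, conjTranspose_kronecker, hA.eq, hB.eq]

theorem inv_diagonal_of_ne_zero {n K : Type*} [Fintype n] [DecidableEq n] [Field K] {d : n → K}
    (hd : ∀ i, d i ≠ 0) : (diagonal d)⁻¹ = diagonal d⁻¹ :=
  inv_eq_right_inv (by simp [diagonal_mul_diagonal, hd])

theorem posDef_inv_diagonal_sub_smul_one {n : Type*} [Fintype n] [DecidableEq n] {d : n → ℝ}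
    (hd : ∀ i, d i ≠ 0) {c : ℝ} (h : ∀ i, c < (d i)⁻¹) : ((diagonal d)⁻¹ - c • 1).PosDef := by
  rw [inv_diagonal_of_ne_zero hd, ← diagonal_one, ← diagonal_smul, diagonal_sub]
  exact .diagonal fun i => by simpa using h i

end Matrix

theorem stmt16_general (N M : ℕ) (ε : ℝ)
    (τ υ ρ : Fin N → ℝ) (δ η : Fin N × Fin M → ℝ)
    (hτ : ∀ n, 0 < τ n) (hυ : ∀ n, 0 < υ n)
    (hδ : ∀ i, 0 < δ i)
    (L : Matrix (Fin N) (Fin N) ℝ) (hLsym : L.IsHermitian)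
    (Abar : Matrix (Fin N × Fin M) (Fin N) ℝ)
    (Llam : Matrix (Fin N × Fin M) (Fin N × Fin M) ℝ)
    (hLlam : Llam = Matrix.kroneckerMap (· * ·) L (1 : Matrix (Fin M) (Fin M) ℝ))
    (B : Matrix ((Fin N ⊕ Fin N) ⊕ ((Fin N × Fin M) ⊕ (Fin N × Fin M))) (Fin N) ℝ)
    (hB : B = Matrix.fromRows
      (Matrix.fromRows (0 : Matrix (Fin N) (Fin N) ℝ) (0 : Matrix (Fin N) (Fin N) ℝ))
      (Matrix.fromRows (0 : Matrix (Fin N × Fin M) (Fin N) ℝ) (-Abar)))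
    (Φ : Matrix (Fin N ⊕ ((Fin N ⊕ Fin N) ⊕ ((Fin N × Fin M) ⊕ (Fin N × Fin M))))
      (Fin N ⊕ ((Fin N ⊕ Fin N) ⊕ ((Fin N × Fin M) ⊕ (Fin N × Fin M)))) ℝ)
    (hΦ : Φ = Matrix.fromBlocks (Matrix.diagonal τ)⁻¹ Bᵀ B
      (Matrix.fromBlocks
        (Matrix.fromBlocks (Matrix.diagonal υ)⁻¹ L L (Matrix.diagonal ρ)⁻¹) 0 0
        (Matrix.fromBlocks (Matrix.diagonal δ)⁻¹ Llam Llam (Matrix.diagonal η)⁻¹)))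
    (h1 : ∀ n, 1 / (2 * ε) < (τ n)⁻¹) (h2 : ∀ n, 1 / (2 * ε) < (υ n)⁻¹)
    (h3 : ∀ i, 1 / (2 * ε) < (δ i)⁻¹)
    (hSchur1 : ((Matrix.diagonal ρ)⁻¹ - (1 / (2 * ε)) • 1
        - L * ((Matrix.diagonal υ)⁻¹ - (1 / (2 * ε)) • 1)⁻¹ * L).PosDef)
    (hSchur2 : ((Matrix.diagonal η)⁻¹ - (1 / (2 * ε)) • 1
        - (Abar * ((Matrix.diagonal τ)⁻¹ - (1 / (2 * ε)) • 1)⁻¹ * Abarᵀ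
          + Llam * ((Matrix.diagonal δ)⁻¹ - (1 / (2 * ε)) • 1)⁻¹ * Llam)).PosDef) :
    (Φ - (1 / (2 * ε)) • 1).PosDef := by
  set c : ℝ := 1 / (2 * ε)
  have hLlamsym : Llam.IsHermitian := hLlam ▸ hLsym.kronecker isHermitian_one
  have hΦc : Φ - c • 1 = fromBlocks ((diagonal τ)⁻¹ - c • 1) Bᵀ Bᵀᴴ
      (fromBlocks (fromBlocks ((diagonal υ)⁻¹ - c • 1) L Lᴴ ((diagonal ρ)⁻¹ - c • 1)) 0 0
        (fromBlocks ((diagonal δ)⁻¹ - c • 1) Llam Llamᴴ ((diagonal η)⁻¹ - c • 1))) := by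
    rw [hΦ, hLsym.eq, hLlamsym.eq, conjTranspose_eq_transpose_of_trivial, transpose_transpose]
    simp only [fromBlocks_sub_smul_one]
  have hcorr : Bᵀᴴ * ((diagonal τ)⁻¹ - c • 1)⁻¹ * Bᵀ =
      fromBlocks 0 0 0 (fromBlocks 0 0 0 (Abar * ((diagonal τ)⁻¹ - c • 1)⁻¹ * Abarᵀ)) := by
    simp only [hB, transpose_fromRows, transpose_zero, fromCols_zero]
    rw [conjTranspose_fromCols_zero_mul_mul_fromCols_zero,
      conjTranspose_fromCols_zero_mul_mul_fromCols_zero, transpose_neg, conjTranspose_neg,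
      conjTranspose_eq_transpose_of_trivial, transpose_transpose]
    simp only [Matrix.neg_mul, Matrix.mul_neg, neg_neg]
  rw [hΦc]
  refine (posDef_fromBlocks₁₁_iff _ _
    (posDef_inv_diagonal_sub_smul_one (fun n => (hτ n).ne') h1)).2 ?_
  rw [hcorr, fromBlocks_sub, fromBlocks_sub]
  simp only [sub_zero]
  refine .fromBlocks_zero_zero ?_ ?_
  · refine (posDef_fromBlocks₁₁_iff L _
      (posDef_inv_diagonal_sub_smul_one (fun n => (hυ n).ne') h2)).2 ?_
    rwa [hLsym.eq]
  · refine (posDef_fromBlocks₁₁_iff Llam _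
      (posDef_inv_diagonal_sub_smul_one (fun i => (hδ i).ne') h3)).2 ?_
    rwa [hLlamsym.eq, sub_sub]

theorem stmt16 (N M : ℕ) (hN : 0 < N) (hM : 0 < M) (ε : ℝ) (hε : 0 < ε)
    (τ υ ρ : Fin N → ℝ) (δ η : Fin N × Fin M → ℝ)
    (hτ : ∀ n, 0 < τ n) (hυ : ∀ n, 0 < υ n) (hρ : ∀ n, 0 < ρ n)
    (hδ : ∀ i, 0 < δ i) (hη : ∀ i, 0 < η i)
    (L : Matrix (Fin N) (Fin N) ℝ) (hLsym : L.IsHermitian)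
    (Abar : Matrix (Fin N × Fin M) (Fin N) ℝ)
    (Llam : Matrix (Fin N × Fin M) (Fin N × Fin M) ℝ)
    (hLlam : Llam = Matrix.kroneckerMap (· * ·) L (1 : Matrix (Fin M) (Fin M) ℝ))
    (B : Matrix ((Fin N ⊕ Fin N) ⊕ ((Fin N × Fin M) ⊕ (Fin N × Fin M))) (Fin N) ℝ)
    (hB : B = Matrix.fromRows
      (Matrix.fromRows (0 : Matrix (Fin N) (Fin N) ℝ) (0 : Matrix (Fin N) (Fin N) ℝ))
      (Matrix.fromRows (0 : Matrix (Fin N × Fin M) (Fin N) ℝ) (-Abar)))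
    (Φ : Matrix (Fin N ⊕ ((Fin N ⊕ Fin N) ⊕ ((Fin N × Fin M) ⊕ (Fin N × Fin M))))
      (Fin N ⊕ ((Fin N ⊕ Fin N) ⊕ ((Fin N × Fin M) ⊕ (Fin N × Fin M)))) ℝ)
    (hΦ : Φ = Matrix.fromBlocks (Matrix.diagonal τ)⁻¹ Bᵀ B
      (Matrix.fromBlocks
        (Matrix.fromBlocks (Matrix.diagonal υ)⁻¹ L L (Matrix.diagonal ρ)⁻¹) 0 0
        (Matrix.fromBlocks (Matrix.diagonal δ)⁻¹ Llam Llam (Matrix.diagonal η)⁻¹)))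
    (hΦpd : Φ.PosDef)
    (h1 : ∀ n, 1 / (2 * ε) < (τ n)⁻¹) (h2 : ∀ n, 1 / (2 * ε) < (υ n)⁻¹)
    (h3 : ∀ i, 1 / (2 * ε) < (δ i)⁻¹)
    (hSchur1 : ((Matrix.diagonal ρ)⁻¹ - (1 / (2 * ε)) • 1
        - L * ((Matrix.diagonal υ)⁻¹ - (1 / (2 * ε)) • 1)⁻¹ * L).PosDef)
    (hSchur2 : ((Matrix.diagonal η)⁻¹ - (1 / (2 * ε)) • 1
        - (Abar * ((Matrix.diagonal τ)⁻¹ - (1 / (2 * ε)) • 1)⁻¹ * Abarᵀ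
          + Llam * ((Matrix.diagonal δ)⁻¹ - (1 / (2 * ε)) • 1)⁻¹ * Llam)).PosDef) :
    (Φ - (1 / (2 * ε)) • 1).PosDef :=
  stmt16_general N M ε τ υ ρ δ η hτ hυ hδ L hLsym Abar Llam hLlam B hB Φ hΦ h1 h2 h3 hSchur1 hSchur2
end
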